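/- arXiv:1603.01555 — 5 statements merged into one kernel-verified Lean document; each statement's English description precedes it below -/
import Mathlib

section
/- A = ℚ[x₁,…,x_k,ξ] is, via ψ, a free S-module of rank k+1 with basis 1, ξ, …, ξᵏ; that is, the S-module map S^{k+1} → A sending (f₀,…,f_k) to ∑_{j=0}^{k} ψ(f_j)·ξʲ is bijective. In particular ψ is injective. (This is the statement that the superbimodule Ω_{k+1,k} is free of graded rank [k+1] as a left Ω_{k+1}-supermodule, read at the level of the underlying cohomology rings.) -/
/-!
For the generating series `y(t) = ∑ yᵢ tⁱ` and `x(t) = ∑ xᵢ tⁱ` one has `ψ(y(t)) = x(t) (1 + ξ t)`.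
Dividing by `1 + ξ t` expresses every `xᵢ` as a polynomial in `ξ` with coefficients in `ψ(S)`,
and `x_{k+1} = 0` says that `ξ` is a root of the monic polynomial
`f = ∑ᵢ (-1)ⁱ yᵢ t^(k+1-i) ∈ S[t]` of degree `k + 1`. These two facts give mutually inverse ring
maps `S[t]/(f) ≅ A` with `t ↦ ξ`, which carry the power basis `1, t, …, tᵏ` of `S[t]/(f)` to
`1, ξ, …, ξᵏ`.
-/

open Polynomial

noncomputable section

/-- `B k = ℚ[x₁,…,x_k]`. -/
abbrev Bk (k : ℕ) : Type := MvPolynomial (Fin k) ℚ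

/-- `A k = ℚ[x₁,…,x_k,ξ]`, the cohomology ring of the infinite partial flag variety
`G_{k,k+1}`; the variable `ξ` is `Polynomial.X`. -/
abbrev Ak (k : ℕ) : Type := Polynomial (Bk k)

/-- The Chern classes, with conventions `x 0 = 1` and `x j = 0` for `j < 0` or `j > k`. -/
noncomputable def xB (k : ℕ) (j : ℤ) : Bk k :=
  if j = 0 then 1
  else if h : 0 < j ∧ j ≤ (k : ℤ) then MvPolynomial.X ⟨(j - 1).toNat, by omega⟩ else 0

noncomputable def xA (k : ℕ) (j : ℤ) : Ak k := Polynomial.C (xB k j)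

/-- The ring homomorphism `ψ : S = ℚ[y₁,…,y_{k+1}] → A` with `ψ(y_j) = x_j + ξ·x_{j−1}`. -/
noncomputable def psi (k : ℕ) : MvPolynomial (Fin (k + 1)) ℚ →+* Ak k :=
  (MvPolynomial.aeval fun j : Fin (k + 1) =>
    xA k ((j : ℤ) + 1) + Polynomial.X * xA k (j : ℤ)).toRingHom

-- The coefficients of the power series `y(t) / (1 + a t)`.
def divLinear {R : Type*} [CommRing R] (a : R) (y : ℕ → R) : ℕ → R
  | 0 => y 0
  | n + 1 => y (n + 1) - a * divLinear a y n

section divLinear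

variable {R R' : Type*} [CommRing R] [CommRing R']

theorem divLinear_succ_add_mul (a : R) (y : ℕ → R) (n : ℕ) :
    divLinear a y (n + 1) + a * divLinear a y n = y (n + 1) :=
  sub_add_cancel _ _

theorem divLinear_eq {a : R} {y x : ℕ → R} (h0 : x 0 = y 0)
    (hsucc : ∀ n, x (n + 1) + a * x n = y (n + 1)) (n : ℕ) : divLinear a y n = x n := by
  induction n with
  | zero => exact h0.symm
  | succ n ih => rw [divLinear, ih, ← hsucc, add_sub_cancel_right]

theorem map_divLinear (φ : R →+* R') (a : R) (y : ℕ → R) (n : ℕ) :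
    φ (divLinear a y n) = divLinear (φ a) (φ ∘ y) n :=
  (divLinear_eq (x := fun m => φ (divLinear a y m)) rfl (fun m => by
    rw [Function.comp_apply, ← divLinear_succ_add_mul a y m, map_add, map_mul]) n).symm

theorem monic_neg_one_pow_mul_divLinear_X {S : Type*} [CommRing S] [Nontrivial S]
    {c : ℕ → S} (hc : c 0 = 1) (n : ℕ) :
    ((-1) ^ n * divLinear X (C ∘ c) n).Monic ∧
      ((-1) ^ n * divLinear X (C ∘ c) n).natDegree = n := by
  induction n with
  | zero => simp [divLinear, hc]
  | succ n ih =>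
    obtain ⟨hmonic, hdeg⟩ := ih
    have hrec : (-1) ^ (n + 1) * divLinear X (C ∘ c) (n + 1) =
        X * ((-1) ^ n * divLinear X (C ∘ c) n) + C ((-1) ^ (n + 1) * c (n + 1)) := by
      simp only [divLinear, Function.comp_apply, map_mul, map_pow, map_neg, map_one]
      ring
    have hXdeg : (X * ((-1) ^ n * divLinear X (C ∘ c) n)).natDegree = n + 1 := by
      rw [monic_X.natDegree_mul hmonic, natDegree_X, hdeg, add_comm]
    have hlt : (C ((-1) ^ (n + 1) * c (n + 1))).degree <
        (X * ((-1) ^ n * divLinear X (C ∘ c) n)).degree :=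
      degree_lt_degree (by rw [natDegree_C, hXdeg]; omega)
    rw [hrec]
    exact ⟨(monic_X.mul hmonic).add_of_left hlt,
      by rw [natDegree_add_eq_left_of_degree_lt hlt, hXdeg]⟩

end divLinear

theorem bijective_sum_mul_pow_of_bijective_lift {S A : Type*} [CommRing S] [CommRing A]
    {f : S[X]} (hf : f.Monic) {n : ℕ} (hn : f.natDegree = n) (φ : S →+* A) (a : A)
    (hfa : f.eval₂ φ a = 0) (hlift : Function.Bijective (AdjoinRoot.lift φ a hfa)) :
    Function.Bijective fun c : Fin n → S => ∑ j : Fin n, φ (c j) * a ^ (j : ℕ) := by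
  set pb := AdjoinRoot.powerBasis' hf
  obtain rfl : pb.dim = n := hn
  have h : (fun c : Fin pb.dim → S => ∑ j, φ (c j) * a ^ (j : ℕ)) =
      AdjoinRoot.lift φ a hfa ∘ pb.basis.equivFun.symm := by
    funext c
    simp [pb, Module.Basis.equivFun_symm_apply, Algebra.smul_def]
  rw [h]
  exact hlift.comp pb.basis.equivFun.symm.bijective

theorem xB_natCast_succ {k n : ℕ} (h : n < k) : xB k ((n : ℤ) + 1) = MvPolynomial.X ⟨n, h⟩ := by
  rw [xB, if_neg (by omega), dif_pos (by omega)]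
  congr
  omega

theorem xB_of_lt {k : ℕ} {j : ℤ} (h : (k : ℤ) < j) : xB k j = 0 := by
  rw [xB, if_neg (by omega), dif_neg (by omega)]

-- `yS k i` is the variable `yᵢ` of `S`, with `y₀ = 1` and `yᵢ = 0` for `i > k + 1`.
def yS (k : ℕ) : ℕ → MvPolynomial (Fin (k + 1)) ℚ
  | 0 => 1
  | j + 1 => if h : j < k + 1 then MvPolynomial.X ⟨j, h⟩ else 0

theorem psi_yS_succ (k n : ℕ) : psi k (yS k (n + 1)) = xA k (n + 1) + X * xA k n := by
  by_cases h : n < k + 1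
  · simp [yS, h, psi, xA]
  · rw [yS, dif_neg h, map_zero, xA, xA, xB_of_lt (by omega), xB_of_lt (by omega)]
    simp

theorem divLinear_X_psi_yS (k n : ℕ) : divLinear X (psi k ∘ yS k) n = xA k n := by
  refine divLinear_eq (x := fun n : ℕ => xA k n) ?_ (fun m => ?_) n
  · simp [yS, xA, xB]
  · rw [Function.comp_apply, psi_yS_succ, Nat.cast_succ]

-- `∑ᵢ (-1)ⁱ yᵢ t^(k+1-i)`: the monic relation of degree `k + 1` satisfied by `ξ` over `S`.
def xiPoly (k : ℕ) : (MvPolynomial (Fin (k + 1)) ℚ)[X] :=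
  (-1) ^ (k + 1) * divLinear X (C ∘ yS k) (k + 1)

theorem xiPoly_monic (k : ℕ) : (xiPoly k).Monic :=
  (monic_neg_one_pow_mul_divLinear_X rfl (k + 1)).1

theorem natDegree_xiPoly (k : ℕ) : (xiPoly k).natDegree = k + 1 :=
  (monic_neg_one_pow_mul_divLinear_X rfl (k + 1)).2

theorem eval₂_psi_xiPoly (k : ℕ) : (xiPoly k).eval₂ (psi k) X = 0 := by
  have hcomp : eval₂RingHom (psi k) X ∘ (C ∘ yS k) = psi k ∘ yS k := by
    funext i
    simp
  rw [← coe_eval₂RingHom, xiPoly, map_mul, map_divLinear, hcomp, coe_eval₂RingHom, eval₂_X,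
    divLinear_X_psi_yS, xA, xB_of_lt (by omega)]
  simp

-- `rootCoeff k n` is where the inverse of `S[t]/(xiPoly k) ≅ A` sends `xₙ`.
def rootCoeff (k : ℕ) : ℕ → AdjoinRoot (xiPoly k) :=
  divLinear (AdjoinRoot.root _) (AdjoinRoot.of _ ∘ yS k)

theorem rootCoeff_succ_eq_zero (k : ℕ) : rootCoeff k (k + 1) = 0 := by
  have h : AdjoinRoot.mk (xiPoly k) ((-1) ^ (k + 1) * divLinear X (C ∘ yS k) (k + 1)) = 0 :=
    AdjoinRoot.mk_self
  rw [map_mul, map_divLinear] at h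
  simpa [rootCoeff, AdjoinRoot.mk_X, Function.comp_def,
    (isUnit_neg_one.pow _).mul_right_eq_zero] using h

def toAdjoinRoot (k : ℕ) : Ak k →+* AdjoinRoot (xiPoly k) :=
  eval₂RingHom (MvPolynomial.eval₂Hom (algebraMap ℚ _) fun i => rootCoeff k (i + 1))
    (AdjoinRoot.root _)

theorem toAdjoinRoot_xA (k : ℕ) {n : ℕ} (hn : n ≤ k + 1) :
    toAdjoinRoot k (xA k n) = rootCoeff k n := by
  rcases n with _ | m
  · simp [toAdjoinRoot, xA, xB, rootCoeff, divLinear, yS]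
  · rcases Nat.lt_or_ge m k with h | h
    · rw [xA, Nat.cast_succ, xB_natCast_succ h]
      simp [toAdjoinRoot]
    · obtain rfl : m = k := by omega
      rw [rootCoeff_succ_eq_zero, xA, xB_of_lt (by omega), map_zero, map_zero]

theorem toAdjoinRoot_X (k : ℕ) : toAdjoinRoot k X = AdjoinRoot.root _ :=
  eval₂_X _ _

theorem toAdjoinRoot_comp_psi (k : ℕ) : (toAdjoinRoot k).comp (psi k) = AdjoinRoot.of _ := by
  refine MvPolynomial.ringHom_ext' (Subsingleton.elim _ _) fun j => ?_
  have hj : MvPolynomial.X j = yS k (j + 1) := by simp [yS, j.isLt]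
  rw [RingHom.comp_apply, hj, psi_yS_succ, map_add, map_mul, ← Nat.cast_succ,
    toAdjoinRoot_xA k (by omega), toAdjoinRoot_xA k (by omega), toAdjoinRoot_X]
  exact divLinear_succ_add_mul _ _ _

theorem lift_rootCoeff (k n : ℕ) :
    AdjoinRoot.lift (psi k) X (eval₂_psi_xiPoly k) (rootCoeff k n) = xA k n := by
  rw [rootCoeff, map_divLinear, AdjoinRoot.lift_root, ← divLinear_X_psi_yS]
  congr 1
  funext i
  exact AdjoinRoot.lift_of _

theorem bijective_lift_xiPoly (k : ℕ) :
    Function.Bijective (AdjoinRoot.lift (psi k) X (eval₂_psi_xiPoly k)) := by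
  set lift := AdjoinRoot.lift (psi k) (X : Ak k) (eval₂_psi_xiPoly k)
  have hleft : (toAdjoinRoot k).comp lift = RingHom.id _ := by
    refine AdjoinRoot.ringHom_ext ?_ ?_
    · rw [RingHom.comp_assoc, AdjoinRoot.lift_comp_of, toAdjoinRoot_comp_psi]
      rfl
    · simp [lift, toAdjoinRoot_X]
  have hC : (lift.comp (toAdjoinRoot k)).comp C = (RingHom.id _).comp C := by
    refine MvPolynomial.ringHom_ext' (Subsingleton.elim (α := ℚ →+* Ak k) _ _) fun i => ?_
    have hσ : toAdjoinRoot k (C (MvPolynomial.X i)) = rootCoeff k (i + 1) := by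
      simp [toAdjoinRoot]
    rw [RingHom.comp_apply, RingHom.comp_apply, hσ, lift_rootCoeff, xA, Nat.cast_succ,
      xB_natCast_succ i.isLt]
    rfl
  have hright : lift.comp (toAdjoinRoot k) = RingHom.id _ := by
    refine Polynomial.ringHom_ext' hC ?_
    simp [lift, toAdjoinRoot_X]
  exact Function.bijective_iff_has_inverse.mpr
    ⟨toAdjoinRoot k, RingHom.congr_fun hleft, RingHom.congr_fun hright⟩

/-- `A = ℚ[x₁,…,x_k,ξ]` is, via `ψ`, a free `S`-module of rank `k+1`
with basis `1, ξ, …, ξᵏ`: the `S`-module map `S^{k+1} → A`, `(f₀,…,f_k) ↦ ∑ ψ(f_j)·ξʲ`,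
is bijective.  In particular, `ψ` is injective. -/
theorem statement1 (k : ℕ) :
    Function.Bijective (fun f : Fin (k + 1) → MvPolynomial (Fin (k + 1)) ℚ =>
      ∑ j : Fin (k + 1), psi k (f j) * (Polynomial.X : Ak k) ^ (j : ℕ)) ∧
    Function.Injective (psi k) := by
  have hlift := bijective_lift_xiPoly k
  refine ⟨bijective_sum_mul_pow_of_bijective_lift (xiPoly_monic k) (natDegree_xiPoly k) _ _ _
    hlift, ?_⟩
  have hdeg : (xiPoly k).degree ≠ 0 := by
    rw [degree_eq_natDegree (xiPoly_monic k).ne_zero, natDegree_xiPoly]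
    exact Nat.cast_ne_zero.mpr k.succ_ne_zero
  rw [← AdjoinRoot.lift_comp_of (h := eval₂_psi_xiPoly k)]
  exact hlift.1.comp (AdjoinRoot.of.injective_of_degree_ne_zero hdeg)
end
end

section
/- In T = A ⊗_S A the identity ∑_{ℓ=0}^{k} (−1)ˡ (x_ℓ ⊗ ξ^{k−ℓ}) = ∑_{ℓ=0}^{k} (−1)ˡ (ξ^{k−ℓ} ⊗ x_ℓ) holds, and moreover ξ slides over this element through the tensor product: (ξ ⊗ 1)·∑_{ℓ=0}^{k} (−1)ˡ (x_ℓ ⊗ ξ^{k−ℓ}) = (1 ⊗ ξ)·∑_{ℓ=0}^{k} (−1)ˡ (x_ℓ ⊗ ξ^{k−ℓ}) = ∑_{ℓ=0}^{k} (−1)ˡ (x_ℓ ⊗ ξ^{k−ℓ+1}). -/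
open Polynomial
open scoped TensorProduct

noncomputable section

/-- `A k` is an `S`-algebra via `ψ`. -/
noncomputable instance (k : ℕ) : Algebra (Bk (k + 1)) (Ak k) := (psi k).toAlgebra

/-- `T = A ⊗_S A`, the cohomology-ring model of `Ω_{k(k+1)k}`. -/
abbrev Tk (k : ℕ) : Type := Ak k ⊗[Bk (k + 1)] Ak k

/-- The element `∑_{ℓ=0}^{k} (−1)ˡ (x_ℓ ⊗ ξ^{k−ℓ})` of `T`. -/
noncomputable def elt (k : ℕ) : Tk k :=
  ∑ l ∈ Finset.range (k + 1),
    ((-1 : Ak k) ^ l * xA k (l : ℤ)) ⊗ₜ[Bk (k + 1)] ((Polynomial.X : Ak k) ^ (k - l))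

/-!
Write `x(t) = ∑ₗ (−1)ˡ xₗ t^{k−ℓ} ∈ A[t]`. The defining relations `yⱼ = xⱼ + ξ xⱼ₋₁` say exactly
that `(t − ξ) x(t) = y(t) := ∑ⱼ (−1)ʲ yⱼ t^{k+1−j}`, a polynomial with coefficients in `S`.
Pushing this along the two inclusions `A → A ⊗_S A` gives, in `T[t]`,
`(t − ξ ⊗ 1) x_L(t) = y(t) = (t − 1 ⊗ ξ) x_R(t)`, and the element in question is `x_L(1 ⊗ ξ)`.
Evaluating at `t = 1 ⊗ ξ` kills the right-hand side, which is the sliding relation; and both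
`x_L(1 ⊗ ξ)` and `x_R(ξ ⊗ 1)` are the divided difference of `y` at the two points, hence equal.
-/

namespace Polynomial

variable {R : Type*} [CommRing R]

theorem eval_eq_eval_of_X_sub_C_mul_eq {a b : R} {p q : R[X]}
    (h : (X - C a) * p = (X - C b) * q) : p.eval b = q.eval a := by
  obtain ⟨r, hr⟩ := X_sub_C_dvd_sub_C_eval (p := p) (a := b)
  set c := p.eval b
  have key : (X - C b) * (q - (X - C a) * r - C c) = (C b - C a) * C c := by
    linear_combination -h + (X - C a) * hr
  have hc : (b - a) * c = 0 := by simpa [eq_comm] using congrArg (eval b) key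
  rw [← C_sub, ← C_mul, hc, C_0, (monic_X_sub_C b).mul_right_eq_zero_iff] at key
  have := congrArg (eval a) key
  simp only [eval_sub, eval_mul, eval_X, eval_C, sub_self, zero_mul, sub_zero, eval_zero] at this
  exact (sub_eq_zero.mp this).symm

theorem mul_eval_eq_of_X_sub_C_mul_eq {a b : R} {p q : R[X]}
    (h : (X - C a) * p = (X - C b) * q) : a * p.eval b = b * p.eval b := by
  have := congrArg (eval b) h
  simp only [eval_mul, eval_sub, eval_X, eval_C, sub_self, zero_mul] at this
  linear_combination -this

theorem X_sub_C_mul_sum_C_mul_X_pow (ξ : R) (c : ℕ → R) (n : ℕ) (hc : c (n + 1) = 0) :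
    (X - C ξ) * ∑ l ∈ Finset.range (n + 1), C (c l) * X ^ (n - l)
      = C (c 0) * X ^ (n + 1) +
        ∑ j ∈ Finset.range (n + 1), C (c (j + 1) - ξ * c j) * X ^ (n - j) := by
  have hX : X * ∑ l ∈ Finset.range (n + 1), C (c l) * X ^ (n - l)
      = C (c 0) * X ^ (n + 1) + ∑ j ∈ Finset.range (n + 1), C (c (j + 1)) * X ^ (n - j) := by
    rw [Finset.mul_sum, Finset.sum_range_succ', Finset.sum_range_succ, hc, C_0, zero_mul,
      add_zero, add_comm]
    congr 1
    · rw [Nat.sub_zero]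
      ring
    · refine Finset.sum_congr rfl fun j hj => ?_
      rw [Finset.mem_range] at hj
      rw [show n - j = n - (j + 1) + 1 by omega, pow_succ]
      ring
  rw [sub_mul, hX, Finset.mul_sum, add_sub_assoc, ← Finset.sum_sub_distrib]
  simp only [C_sub, C_mul, sub_mul, mul_assoc]

theorem X_sub_C_mul_map_includeLeft_eq_includeRight {S A : Type*} [CommRing S] [CommRing A]
    [Algebra S A] {ξ : A} {P : A[X]} {Q : S[X]} (h : (X - C ξ) * P = Q.map (algebraMap S A)) :
    (X - C (ξ ⊗ₜ[S] (1 : A))) * P.map Algebra.TensorProduct.includeLeftRingHom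
      = (X - C ((1 : A) ⊗ₜ[S] ξ)) *
          P.map (Algebra.TensorProduct.includeRight : A →ₐ[S] A ⊗[S] A).toRingHom := by
  have hL := congrArg (map (Algebra.TensorProduct.includeLeftRingHom : A →+* A ⊗[S] A)) h
  have hR := congrArg (map (Algebra.TensorProduct.includeRight : A →ₐ[S] A ⊗[S] A).toRingHom) h
  simp only [Polynomial.map_mul, Polynomial.map_sub, map_X, map_C, map_map,
    Algebra.TensorProduct.includeLeftRingHom_comp_algebraMap] at hL hR
  exact hL.trans hR.symm

end Polynomial

theorem TensorProduct.neg_one_pow_mul_tmul {R A B : Type*} [CommRing R] [Ring A] [Ring B]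
    [Algebra R A] [Algebra R B] (n : ℕ) (a : A) (b : B) :
    ((-1 : A) ^ n * a) ⊗ₜ[R] b = a ⊗ₜ[R] ((-1 : B) ^ n * b) := by
  rcases n.even_or_odd with hn | hn <;>
    simp [hn.neg_one_pow, TensorProduct.neg_tmul, TensorProduct.tmul_neg]

theorem xA_zero (k : ℕ) : xA k 0 = 1 := by
  simp [xA, xB]

theorem xA_natCast_succ_self (k : ℕ) : xA k ((k + 1 : ℕ) : ℤ) = 0 := by
  simp only [xA, xB]
  rw [if_neg (by omega), dif_neg (by omega), map_zero]

theorem algebraMap_X_eq_xA (k : ℕ) (j : Fin (k + 1)) :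
    algebraMap (Bk (k + 1)) (Ak k) (MvPolynomial.X j)
      = xA k ((j : ℕ) + 1 : ℕ) + Polynomial.X * xA k (j : ℕ) :=
  MvPolynomial.aeval_X _ j

-- Here `X` is the variable `t` of `(Ak k)[X]`, while `ξ` is `(Polynomial.X : Ak k)`.
def xPoly (k : ℕ) : (Ak k)[X] :=
  ∑ l ∈ Finset.range (k + 1), C ((-1 : Ak k) ^ l * xA k (l : ℤ)) * X ^ (k - l)

def yPoly (k : ℕ) : (Bk (k + 1))[X] :=
  X ^ (k + 1) + ∑ j : Fin (k + 1), C ((-1) ^ ((j : ℕ) + 1) * MvPolynomial.X j) * X ^ (k - j)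

theorem X_sub_C_mul_xPoly (k : ℕ) :
    (X - C Polynomial.X) * xPoly k = (yPoly k).map (algebraMap (Bk (k + 1)) (Ak k)) := by
  rw [xPoly, X_sub_C_mul_sum_C_mul_X_pow _ _ _ (by rw [xA_natCast_succ_self, mul_zero]),
    yPoly, Polynomial.map_add, Polynomial.map_pow, map_X, Polynomial.map_sum,
    Finset.sum_range, pow_zero, one_mul, Nat.cast_zero, xA_zero, C_1, one_mul]
  congr 1
  refine Finset.sum_congr rfl fun j _ => ?_
  rw [Polynomial.map_mul, Polynomial.map_pow, map_X, map_C, map_mul, map_pow, map_neg, map_one,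
    algebraMap_X_eq_xA]
  congr 2
  ring

theorem elt_eq_eval_map_includeLeft (k : ℕ) :
    elt k = ((xPoly k).map Algebra.TensorProduct.includeLeftRingHom).eval
      ((1 : Ak k) ⊗ₜ[Bk (k + 1)] (Polynomial.X : Ak k)) := by
  simp only [elt, xPoly, Polynomial.map_sum, Polynomial.map_mul, Polynomial.map_pow, map_C,
    map_X, eval_finsetSum, eval_C_mul, eval_X_pow,
    Algebra.TensorProduct.includeLeftRingHom_apply, Algebra.TensorProduct.tmul_pow, one_pow,
    Algebra.TensorProduct.tmul_mul_tmul, mul_one, one_mul]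

theorem sum_tmul_eq_eval_map_includeRight (k : ℕ) :
    ∑ l ∈ Finset.range (k + 1),
        ((-1 : Ak k) ^ l * (Polynomial.X : Ak k) ^ (k - l)) ⊗ₜ[Bk (k + 1)] xA k (l : ℤ)
      = ((xPoly k).map
          (Algebra.TensorProduct.includeRight : Ak k →ₐ[Bk (k + 1)] Tk k).toRingHom).eval
        ((Polynomial.X : Ak k) ⊗ₜ[Bk (k + 1)] (1 : Ak k)) := by
  simp only [xPoly, Polynomial.map_sum, Polynomial.map_mul, Polynomial.map_pow, map_C,
    map_X, eval_finsetSum, eval_C_mul, eval_X_pow, AlgHom.toRingHom_eq_coe,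
    RingHom.coe_coe, Algebra.TensorProduct.includeRight_apply, Algebra.TensorProduct.tmul_pow,
    one_pow, Algebra.TensorProduct.tmul_mul_tmul, mul_one, one_mul,
    TensorProduct.neg_one_pow_mul_tmul]

/-- In `T = A ⊗_S A`:
`∑_{ℓ=0}^{k} (−1)ˡ (x_ℓ ⊗ ξ^{k−ℓ}) = ∑_{ℓ=0}^{k} (−1)ˡ (ξ^{k−ℓ} ⊗ x_ℓ)`, and `ξ` slides over
this element through the tensor product:
`(ξ ⊗ 1)·∑ (−1)ˡ (x_ℓ ⊗ ξ^{k−ℓ}) = (1 ⊗ ξ)·∑ (−1)ˡ (x_ℓ ⊗ ξ^{k−ℓ}) = ∑ (−1)ˡ (x_ℓ ⊗ ξ^{k−ℓ+1})`. -/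
theorem statement2 (k : ℕ) :
    elt k = (∑ l ∈ Finset.range (k + 1),
        ((-1 : Ak k) ^ l * (Polynomial.X : Ak k) ^ (k - l)) ⊗ₜ[Bk (k + 1)] xA k (l : ℤ)) ∧
    ((Polynomial.X : Ak k) ⊗ₜ[Bk (k + 1)] (1 : Ak k)) * elt k
      = ((1 : Ak k) ⊗ₜ[Bk (k + 1)] (Polynomial.X : Ak k)) * elt k ∧
    ((Polynomial.X : Ak k) ⊗ₜ[Bk (k + 1)] (1 : Ak k)) * elt k
      = ∑ l ∈ Finset.range (k + 1),
          ((-1 : Ak k) ^ l * xA k (l : ℤ)) ⊗ₜ[Bk (k + 1)] ((Polynomial.X : Ak k) ^ (k - l + 1)) := by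
  have h := X_sub_C_mul_map_includeLeft_eq_includeRight (X_sub_C_mul_xPoly k)
  have hslide : ((Polynomial.X : Ak k) ⊗ₜ[Bk (k + 1)] (1 : Ak k)) * elt k
      = ((1 : Ak k) ⊗ₜ[Bk (k + 1)] (Polynomial.X : Ak k)) * elt k := by
    rw [elt_eq_eval_map_includeLeft]
    exact mul_eval_eq_of_X_sub_C_mul_eq h
  refine ⟨?_, hslide, ?_⟩
  · rw [elt_eq_eval_map_includeLeft, sum_tmul_eq_eval_map_includeRight]
    exact eval_eq_eval_of_X_sub_C_mul_eq h
  · rw [hslide, elt, Finset.mul_sum]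
    refine Finset.sum_congr rfl fun l _ => ?_
    rw [Algebra.TensorProduct.tmul_mul_tmul, one_mul, ← pow_succ']
end
end

section
/- For all i, j ≥ 0 the following identities hold in ℚ[ξ₁,ξ₂]: ξ₁ⁱξ₂ʲ = X(ξ₁^{i+1}ξ₂ʲ) − X(ξ₁ⁱξ₂ʲ)·ξ₂ and ξ₁ⁱξ₂ʲ = ξ₁·X(ξ₁ⁱξ₂ʲ) − X(ξ₁ⁱξ₂^{j+1}); consequently X(ξ₁^{i+1}ξ₂^{j+1}) = ξ₁·X(ξ₁ⁱξ₂ʲ)·ξ₂. -/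
noncomputable section

/-- `ℚ[ξ₁,ξ₂]`. -/
abbrev R2 : Type := MvPolynomial (Fin 2) ℚ

/-- The variable `ξ₁`. -/
noncomputable def xi1 : R2 := MvPolynomial.X 0

/-- The variable `ξ₂`. -/
noncomputable def xi2 : R2 := MvPolynomial.X 1

/-!
The operator `X` is the divided difference `f ↦ (f - s f) / (ξ₁ - ξ₂)`, where `s` swaps the
variables: by the geometric-sum identity `(ξ₁ - ξ₂) · X(ξ₁ⁱξ₂ʲ) = ξ₁ⁱξ₂ʲ - ξ₁ʲξ₂ⁱ`.
Multiplied by `ξ₁ - ξ₂`, each of the three identities therefore becomes a polynomial identity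
in `ξ₁ⁱ, ξ₂ʲ, ξ₁ʲ, ξ₂ⁱ, ξ₁, ξ₂`, and `ξ₁ - ξ₂` can be cancelled since `ℚ[ξ₁,ξ₂]` is a domain.
-/

open Finset

theorem sub_mul_sum_range_pow_mul_pow {R : Type*} [CommRing R] (x y : R) (i j : ℕ) :
    (x - y) * ∑ l ∈ range i, x ^ (i + j - 1 - l) * y ^ l = x ^ (i + j) - x ^ j * y ^ i := by
  have hterm : ∀ l ∈ range i, x ^ (i + j - 1 - l) * y ^ l = x ^ j * (y ^ l * x ^ (i - 1 - l)) := by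
    intro l hl
    rw [show i + j - 1 - l = j + (i - 1 - l) by grind, pow_add]
    ring
  rw [sum_congr rfl hterm, ← mul_sum, ← geom_sum₂_comm, mul_left_comm,
    (Commute.all x y).mul_geom_sum₂, pow_add]
  ring

theorem xi1_sub_xi2_ne_zero : xi1 - xi2 ≠ 0 :=
  sub_ne_zero.mpr <| (MvPolynomial.X_injective (σ := Fin 2) (R := ℚ)).ne (by decide)

/-- Let `X` be the ℚ-linear endomorphism of `ℚ[ξ₁,ξ₂]` defined on monomials by
`X(ξ₁ⁱξ₂ʲ) = ∑_{ℓ=0}^{i−1} ξ₁^{i+j−1−ℓ}ξ₂^{ℓ} − ∑_{ℓ=0}^{j−1} ξ₁^{i+j−1−ℓ}ξ₂^{ℓ}`.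
Then for all `i, j ≥ 0`:
`ξ₁ⁱξ₂ʲ = X(ξ₁^{i+1}ξ₂ʲ) − X(ξ₁ⁱξ₂ʲ)·ξ₂` and `ξ₁ⁱξ₂ʲ = ξ₁·X(ξ₁ⁱξ₂ʲ) − X(ξ₁ⁱξ₂^{j+1})`;
consequently `X(ξ₁^{i+1}ξ₂^{j+1}) = ξ₁·X(ξ₁ⁱξ₂ʲ)·ξ₂`. -/
theorem statement6 (Xop : R2 →ₗ[ℚ] R2)
    (hX : ∀ i j : ℕ, Xop (xi1 ^ i * xi2 ^ j)
      = ∑ l ∈ Finset.range i, xi1 ^ (i + j - 1 - l) * xi2 ^ l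
        - ∑ l ∈ Finset.range j, xi1 ^ (i + j - 1 - l) * xi2 ^ l) :
    ∀ i j : ℕ,
      (xi1 ^ i * xi2 ^ j = Xop (xi1 ^ (i + 1) * xi2 ^ j) - Xop (xi1 ^ i * xi2 ^ j) * xi2) ∧
      (xi1 ^ i * xi2 ^ j = xi1 * Xop (xi1 ^ i * xi2 ^ j) - Xop (xi1 ^ i * xi2 ^ (j + 1))) ∧
      (Xop (xi1 ^ (i + 1) * xi2 ^ (j + 1)) = xi1 * Xop (xi1 ^ i * xi2 ^ j) * xi2) := by
  have hdiv : ∀ i j : ℕ,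
      (xi1 - xi2) * Xop (xi1 ^ i * xi2 ^ j) = xi1 ^ i * xi2 ^ j - xi1 ^ j * xi2 ^ i := by
    intro i j
    rw [hX, mul_sub, sub_mul_sum_range_pow_mul_pow, add_comm i j, sub_mul_sum_range_pow_mul_pow]
    ring
  intro i j
  refine ⟨?_, ?_, ?_⟩ <;> apply mul_left_cancel₀ xi1_sub_xi2_ne_zero
  · linear_combination -hdiv (i + 1) j + xi2 * hdiv i j
  · linear_combination -xi1 * hdiv i j + hdiv i (j + 1)
  · linear_combination hdiv (i + 1) (j + 1) - xi1 * xi2 * hdiv i j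
end
end

section
/- On P_n the following operator identities hold for every 1 ≤ i ≤ n−1: ∂_i∘W_j = W_j∘∂_i for every j ≠ i, and ∂_i∘W_i = W_i∘∂_i + W_{i+1}∘(∂_i∘X_{i+1} − X_{i+1}∘∂_i). (These are the defining relations of the smash-product presentation of the extended nilHecke algebra A_n of the paper.) -/
open scoped TensorProduct

set_option synthInstance.maxHeartbeats 1000000
set_option maxHeartbeats 1000000

noncomputable section

/-- The polynomial ring `ℚ[x₁,…,x_n]`. -/
abbrev Rp (n : ℕ) : Type := MvPolynomial (Fin n) ℚ

/-- The exterior ℚ-algebra `Λ(ω₁,…,ω_n)` on `n` generators. -/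
abbrev Ep (n : ℕ) : Type := ExteriorAlgebra ℚ (Fin n → ℚ)

/-- `P_n = ℚ[x₁,…,x_n] ⊗ Λ(ω₁,…,ω_n)`. -/
abbrev Pn (n : ℕ) : Type := Rp n ⊗[ℚ] Ep n

noncomputable instance (n : ℕ) : Ring (Pn n) := inferInstance
noncomputable instance (n : ℕ) : Algebra ℚ (Pn n) := inferInstance

/-- The (central) polynomial generator `x_j` of `P_n`. -/
noncomputable def xE (n : ℕ) (j : Fin n) : Pn n := (MvPolynomial.X j) ⊗ₜ[ℚ] (1 : Ep n)

/-- The odd generator `ω_j` of `P_n`. -/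
noncomputable def wE (n : ℕ) (j : Fin n) : Pn n :=
  (1 : Rp n) ⊗ₜ[ℚ] ExteriorAlgebra.ι ℚ (Pi.single j (1 : ℚ))

/-- The defining values of the ℚ-algebra automorphism `σ_i` on the generators. -/
def SigmaProps (n : ℕ) (σ : ∀ i : ℕ, i + 1 < n → (Pn n ≃ₐ[ℚ] Pn n)) : Prop :=
  ∀ (i : ℕ) (hi : i + 1 < n),
    σ i hi (xE n ⟨i, by omega⟩) = xE n ⟨i + 1, hi⟩ ∧
    σ i hi (xE n ⟨i + 1, hi⟩) = xE n ⟨i, by omega⟩ ∧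
    (∀ j : Fin n, (j : ℕ) ≠ i → (j : ℕ) ≠ i + 1 → σ i hi (xE n j) = xE n j) ∧
    σ i hi (wE n ⟨i, by omega⟩)
      = wE n ⟨i, by omega⟩ + (xE n ⟨i, by omega⟩ - xE n ⟨i + 1, hi⟩) * wE n ⟨i + 1, hi⟩ ∧
    (∀ j : Fin n, (j : ℕ) ≠ i → σ i hi (wE n j) = wE n j)

/-!
Write `c = x_i - x_{i+1}`. Since `c` is central and left-regular, `∂_i` is the unique operator with
`c ∂_i f = f - σ_i f`, and it satisfies the twisted Leibniz rule `∂_i(a f) = ∂_i(a) f + σ_i(a) ∂_i(f)`.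
Both identities then come down to the values `∂_i ω_j = 0` for `j ≠ i`, `∂_i ω_i = -ω_{i+1}` and
`∂_i x_{i+1} = -1`, read off from the action of `σ_i` on the generators.
-/

section DivDiff

variable {A F : Type*} [Ring A] [FunLike F A A] {σ : F} {c : A} {D : A → A}

theorem divDiff_eq_of_sub_eq (hc : IsLeftRegular c) (hD : ∀ f, c * D f = f - σ f) {a b : A}
    (h : a - σ a = c * b) : D a = b :=
  hc (show c * D a = c * b by rw [hD, h])

theorem divDiff_mul [MulHomClass F A A] (hcomm : ∀ a, Commute c a) (hc : IsLeftRegular c)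
    (hD : ∀ f, c * D f = f - σ f) (a f : A) : D (a * f) = D a * f + σ a * D f :=
  divDiff_eq_of_sub_eq hc hD <| by
    rw [mul_add, ← mul_assoc, (hcomm (σ a)).left_comm, hD, hD, map_mul]
    noncomm_ring

end DivDiff

theorem mulLeft_tmul_one {R A B : Type*} [CommRing R] [CommRing A] [Ring B] [Algebra R A]
    [Algebra R B] (a : A) :
    LinearMap.mulLeft R (a ⊗ₜ[R] (1 : B)) = (LinearMap.mulLeft R a).rTensor B :=
  TensorProduct.ext' fun p e => by simp [Algebra.TensorProduct.tmul_mul_tmul]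

theorem isLeftRegular_tmul_one {R A B : Type*} [CommRing R] [CommRing A] [Ring B] [Algebra R A]
    [Algebra R B] [Module.Flat R B] {a : A} (ha : IsLeftRegular a) :
    IsLeftRegular (a ⊗ₜ[R] (1 : B)) := by
  have h := Module.Flat.rTensor_preserves_injective_linearMap (M := B) (LinearMap.mulLeft R a) ha
  rwa [← mulLeft_tmul_one] at h

theorem commute_xE (n : ℕ) (j : Fin n) (t : Pn n) : Commute (xE n j) t := by
  induction t using TensorProduct.induction_on with
  | zero => exact Commute.zero_right _
  | tmul q e =>
    simp only [xE, Commute, SemiconjBy, Algebra.TensorProduct.tmul_mul_tmul, mul_comm q, one_mul,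
      mul_one]
  | add a b ha hb => exact ha.add_right hb

theorem isLeftRegular_xE_sub_xE (n : ℕ) {j k : Fin n} (hjk : j ≠ k) :
    IsLeftRegular (xE n j - xE n k) := by
  rw [xE, xE, ← TensorProduct.sub_tmul]
  exact isLeftRegular_tmul_one
    (IsRegular.of_ne_zero (sub_ne_zero.2 (MvPolynomial.X_injective.ne hjk))).left

/-- With `∂_i` the divided-difference operator
`∂_i(f) = (f − σ_i(f))/(x_i − x_{i+1})`, the following operator identities hold on `P_n`:
`∂_i∘W_j = W_j∘∂_i` for every `j ≠ i`, and
`∂_i∘W_i = W_i∘∂_i + W_{i+1}∘(∂_i∘X_{i+1} − X_{i+1}∘∂_i)`,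
where `X_j` and `W_j` denote left multiplication by `x_j` and `ω_j` respectively. -/
theorem statement12 (n : ℕ)
    (σ : ∀ i : ℕ, i + 1 < n → (Pn n ≃ₐ[ℚ] Pn n)) (hσ : SigmaProps n σ)
    (D : ∀ i : ℕ, i + 1 < n → Module.End ℚ (Pn n))
    (hD : ∀ (i : ℕ) (hi : i + 1 < n) (f : Pn n),
      (xE n ⟨i, by omega⟩ - xE n ⟨i + 1, hi⟩) * (D i hi f) = f - σ i hi f) :
    ∀ (i : ℕ) (hi : i + 1 < n),
      (∀ j : Fin n, (j : ℕ) ≠ i →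
        D i hi * LinearMap.mulLeft ℚ (wE n j)
          = LinearMap.mulLeft ℚ (wE n j) * D i hi) ∧
      D i hi * LinearMap.mulLeft ℚ (wE n ⟨i, by omega⟩)
        = LinearMap.mulLeft ℚ (wE n ⟨i, by omega⟩) * D i hi
          + LinearMap.mulLeft ℚ (wE n ⟨i + 1, hi⟩)
            * (D i hi * LinearMap.mulLeft ℚ (xE n ⟨i + 1, hi⟩)
               - LinearMap.mulLeft ℚ (xE n ⟨i + 1, hi⟩) * D i hi) := by
  intro i hi
  obtain ⟨-, hσx, -, hσw, hσw'⟩ := hσ i hi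
  have hcomm : ∀ a, Commute (xE n ⟨i, by omega⟩ - xE n ⟨i + 1, hi⟩) a :=
    fun a => (commute_xE n _ a).sub_left (commute_xE n _ a)
  have hc := isLeftRegular_xE_sub_xE n (j := ⟨i, by omega⟩) (k := ⟨i + 1, hi⟩) (by simp)
  have hleib := divDiff_mul hcomm hc (hD i hi)
  have hDw : ∀ j : Fin n, (j : ℕ) ≠ i → D i hi (wE n j) = 0 := fun j hj =>
    divDiff_eq_of_sub_eq hc (hD i hi) (by rw [hσw' j hj, sub_self, mul_zero])
  have hDwi : D i hi (wE n ⟨i, by omega⟩) = -wE n ⟨i + 1, hi⟩ :=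
    divDiff_eq_of_sub_eq hc (hD i hi) (by rw [hσw]; noncomm_ring)
  have hDx : D i hi (xE n ⟨i + 1, hi⟩) = -1 :=
    divDiff_eq_of_sub_eq hc (hD i hi) (by rw [hσx]; noncomm_ring)
  refine ⟨fun j hj => LinearMap.ext fun f => ?_, LinearMap.ext fun f => ?_⟩
  · simp [hleib, hDw j hj, hσw' j hj]
  · simp only [Module.End.mul_apply, LinearMap.mulLeft_apply, LinearMap.add_apply,
      LinearMap.sub_apply]
    rw [hleib, hleib, hDwi, hDx, hσw, hσx, (hcomm _).eq]
    noncomm_ring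
end
end

section
/- Let X be an R-module such that every submodule of X is stable for descending filtrations. Suppose X = A₀ ⊇ A₁ ⊇ ⋯ and X = B₀ ⊇ B₁ ⊇ ⋯ are two chains of submodules with ⋂_i A_i = 0 = ⋂_i B_i, such that every quotient A_i/A_{i+1} and every quotient B_i/B_{i+1} is zero or isomorphic to some S_j, and for every j ∈ J the sets {i : A_i/A_{i+1} ≅ S_j} and {i : B_i/B_{i+1} ≅ S_j} are finite. Then for every j ∈ J these two sets have the same cardinality; that is, the two ℤ-composition series have the same simple factors with the same multiplicities. -/
/-- The subquotient `A/B` of an ambient module. -/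
abbrev quotSub {R X : Type*} [Ring R] [AddCommGroup X] [Module R X]
    (A B : Submodule R X) : Type _ :=
  ↥A ⧸ B.comap A.subtype

/-- A module `Y` is *stable for descending filtrations* if for any two chains of submodules
`Y = C₀ ⊇ C₁ ⊇ ⋯` and `Y = D₀ ⊇ D₁ ⊇ ⋯` with `⋂ᵢ Cᵢ = 0 = ⋂ᵢ Dᵢ`, and for each index `i`,
there exists `m` with `D_m ⊆ C_i`. -/
def StableDesc (R Y : Type*) [Ring R] [AddCommGroup Y] [Module R Y] : Prop :=
  ∀ C D : ℕ → Submodule R Y, C 0 = ⊤ → D 0 = ⊤ →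
    (∀ i, C (i + 1) ≤ C i) → (∀ i, D (i + 1) ≤ D i) →
    (⨅ i, C i) = ⊥ → (⨅ i, D i) = ⊥ →
    ∀ i, ∃ m, D m ≤ C i

/-!
Stability of `X` lets each filtration be pushed below any stage of the other: given `n`, pick
`m` with `B m ≤ A n`. By modularity the chain
`A 0 ⊇ ⋯ ⊇ A n ⊇ A n ⊓ B 1 ⊇ ⋯ ⊇ A n ⊓ B m = B m` still has steps that are zero or simple, so
Jordan–Hölder compares it with `B 0 ⊇ ⋯ ⊇ B m`: the first `n` steps of `A` contain at most as
many factors `≅ S j` as the first `m` steps of `B`. Taking `n` beyond the last such factor of `A`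
gives one inequality, and symmetry the other.
-/

theorem WCovBy.inf_left {α : Type*} [Lattice α] [IsLowerModularLattice α] {x y : α}
    (h : x ⩿ y) (a : α) : a ⊓ x ⩿ a ⊓ y := by
  by_cases hle : a ⊓ y ≤ x
  · rw [(inf_le_inf_left a h.le).antisymm (le_inf inf_le_left hle)]
    exact .rfl
  · have hsup : x ⊔ a ⊓ y = y :=
      (h.eq_or_eq le_sup_left (sup_le h.le inf_le_right)).resolve_left fun hx =>
        hle (sup_eq_left.1 hx)
    have hcov : x ⋖ x ⊔ a ⊓ y := by
      rw [hsup]; exact h.covBy_of_lt (hsup ▸ left_lt_sup.2 hle)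
    have hinf : x ⊓ (a ⊓ y) = a ⊓ x := by
      rw [inf_comm a y, ← inf_assoc, inf_eq_left.2 h.le, inf_comm]
    exact hinf ▸ (inf_covBy_of_covBy_sup_left hcov).wcovBy

theorem StableDesc.of_linearEquiv {R Y Z : Type*} [Ring R] [AddCommGroup Y] [Module R Y]
    [AddCommGroup Z] [Module R Z] (e : Y ≃ₗ[R] Z) (h : StableDesc R Y) : StableDesc R Z := by
  intro C D hC0 hD0 hC hD hCinf hDinf i
  let φ := (Submodule.orderIsoMapComap e).symm
  obtain ⟨m, hm⟩ := h (φ ∘ C) (φ ∘ D) (by simp [hC0]) (by simp [hD0])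
    (fun i => φ.monotone (hC i)) (fun i => φ.monotone (hD i))
    (by simp [← φ.map_iInf, hCinf]) (by simp [← φ.map_iInf, hDinf]) i
  exact ⟨m, φ.le_iff_le.1 hm⟩

section Modules

variable {R X : Type*} [Ring R] [AddCommGroup X] [Module R X]

theorem wcovBy_of_quotSub {N M : Submodule R X} (hNM : N ≤ M)
    (h : Subsingleton (quotSub M N) ∨ IsSimpleModule R (quotSub M N)) : N ⩿ M := by
  rcases h with h | h
  · rw [hNM.antisymm
      (Submodule.comap_subtype_eq_top.1 (Submodule.Quotient.subsingleton_iff.1 h))]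
    exact .rfl
  · exact ((covBy_iff_quot_is_simple hNM).2 h).wcovBy

variable (T : Type*) [AddCommGroup T] [Module R T]

open Classical in
noncomputable def CompositionSeries.factorCount (s : CompositionSeries (Submodule R X)) : ℕ :=
  ∑ k : Fin s.length, if Nonempty (quotSub (s k.succ) (s k.castSucc) ≃ₗ[R] T) then 1 else 0

def factorIndices (c : ℕ → Submodule R X) : Set ℕ :=
  {i | Nonempty (quotSub (c i) (c (i + 1)) ≃ₗ[R] T)}

open Classical in
noncomputable def chainFactorCount (c : ℕ → Submodule R X) (n : ℕ) : ℕ :=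
  ∑ i ∈ Finset.range n, if Nonempty (quotSub (c i) (c (i + 1)) ≃ₗ[R] T) then 1 else 0

variable {T}

namespace CompositionSeries

theorem factorCount_eq_of_equivalent {s t : CompositionSeries (Submodule R X)}
    (h : s.Equivalent t) : s.factorCount T = t.factorCount T := by
  classical
  obtain ⟨e, he⟩ := h
  rw [factorCount, factorCount, ← e.sum_comp]
  refine Finset.sum_congr rfl fun i _ => if_congr ?_ rfl rfl
  have f := JordanHolderLattice.Iso.linearEquiv (he i)
  exact ⟨fun ⟨g⟩ => ⟨f.symm.trans g⟩, fun ⟨g⟩ => ⟨f.trans g⟩⟩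

open Classical in
theorem factorCount_snoc (s : CompositionSeries (Submodule R X)) (x : Submodule R X)
    (hx : JordanHolderLattice.IsMaximal s.last x) :
    factorCount T (s.snoc x hx) =
      s.factorCount T + if Nonempty (quotSub x s.last ≃ₗ[R] T) then 1 else 0 := by
  change (∑ k : Fin (s.length + 1), if Nonempty (quotSub ((s.snoc x hx) k.succ)
    ((s.snoc x hx) k.castSucc) ≃ₗ[R] T) then 1 else 0) = _
  rw [Fin.sum_univ_castSucc]
  congr 1
  · refine Finset.sum_congr rfl fun i _ => ?_
    rw [Fin.succ_castSucc]; erw [RelSeries.snoc_castSucc, RelSeries.snoc_castSucc]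
  · rw [Fin.succ_last, RelSeries.last_snoc']; erw [RelSeries.snoc_castSucc]
    rfl

end CompositionSeries

theorem exists_compositionSeries_factorCount_eq [Nontrivial T] :
    ∀ (n : ℕ) (c : ℕ → Submodule R X), (∀ i, c (i + 1) ⩿ c i) →
      ∃ s : CompositionSeries (Submodule R X),
        s.head = c n ∧ s.last = c 0 ∧ s.factorCount T = chainFactorCount T c n
  | 0, c, _ => ⟨RelSeries.singleton _ (c 0), rfl, rfl, rfl⟩
  | n + 1, c, hc => by
    classical
    obtain ⟨s, hhead, hlast, hcount⟩ :=
      exists_compositionSeries_factorCount_eq n (fun i => c (i + 1)) fun i => hc (i + 1)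
    have hsum : chainFactorCount T c (n + 1) = chainFactorCount T (fun i => c (i + 1)) n +
        if Nonempty (quotSub (c 0) (c 1) ≃ₗ[R] T) then 1 else 0 := by
      simp only [chainFactorCount, Finset.sum_range_succ']
    rcases (hc 0).covBy_or_eq with hcov | heq
    · refine ⟨s.snoc (c 0) (hlast ▸ hcov), by rw [RelSeries.head_snoc, hhead],
        by rw [RelSeries.last_snoc], ?_⟩
      rw [CompositionSeries.factorCount_snoc, hcount, hsum, hlast]
    · refine ⟨s, hhead, hlast.trans heq, ?_⟩
      have hzero : ¬ Nonempty (quotSub (c 0) (c 1) ≃ₗ[R] T) := fun ⟨e⟩ =>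
        have : Subsingleton (quotSub (c 0) (c 1)) :=
          Submodule.Quotient.subsingleton_iff.2 (Submodule.comap_subtype_eq_top.2 heq.ge)
        not_subsingleton T e.symm.toEquiv.subsingleton
      rw [hcount, hsum, if_neg hzero, add_zero]

theorem chainFactorCount_eq_of_wcovBy [Nontrivial T] {c d : ℕ → Submodule R X}
    (hc : ∀ i, c (i + 1) ⩿ c i) (hd : ∀ i, d (i + 1) ⩿ d i) {n m : ℕ}
    (hbot : c n = d m) (htop : c 0 = d 0) :
    chainFactorCount T c n = chainFactorCount T d m := by
  obtain ⟨s, hs_head, hs_last, hs⟩ := exists_compositionSeries_factorCount_eq (T := T) n c hc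
  obtain ⟨t, ht_head, ht_last, ht⟩ := exists_compositionSeries_factorCount_eq (T := T) m d hd
  rw [← hs, ← ht]
  exact CompositionSeries.factorCount_eq_of_equivalent <| CompositionSeries.jordan_holder s t
    (by rw [hs_head, ht_head, hbot]) (by rw [hs_last, ht_last, htop])

theorem chainFactorCount_mono (c : ℕ → Submodule R X) : Monotone (chainFactorCount T c) :=
  fun _ _ h => Finset.sum_le_sum_of_subset (Finset.range_subset_range.2 h)

theorem chainFactorCount_congr {c d : ℕ → Submodule R X} {n : ℕ} (h : ∀ i ≤ n, c i = d i) :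
    chainFactorCount T c n = chainFactorCount T d n :=
  Finset.sum_congr rfl fun i hi => by
    rw [h i (Finset.mem_range.1 hi).le, h (i + 1) (Finset.mem_range.1 hi)]

theorem chainFactorCount_le_of_le [Nontrivial T] {c d : ℕ → Submodule R X}
    (hc : ∀ i, c (i + 1) ⩿ c i) (hd : ∀ i, d (i + 1) ⩿ d i) (htop : c 0 = d 0) {n m : ℕ}
    (hle : d m ≤ c n) : chainFactorCount T c n ≤ chainFactorCount T d m := by
  set e : ℕ → Submodule R X := fun i => c (min i n) ⊓ d (i - n) with he_def
  have hce : ∀ i ≤ n, c i = e i := fun i hi => by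
    simp only [he_def]
    rw [min_eq_left hi, Nat.sub_eq_zero_of_le hi, ← htop, inf_eq_left.2
      (antitone_nat_of_succ_le (fun i => (hc i).le) (Nat.zero_le i))]
  have he : ∀ i, e (i + 1) ⩿ e i := fun i => by
    rcases lt_or_ge i n with h | h
    · rw [← hce i h.le, ← hce (i + 1) h]
      exact hc i
    · simp only [he_def]
      rw [min_eq_right h, min_eq_right (h.trans i.le_succ), Nat.sub_add_comm h]
      exact (hd _).inf_left _
  calc chainFactorCount T c n = chainFactorCount T e n := chainFactorCount_congr hce
    _ ≤ chainFactorCount T e (n + m) := chainFactorCount_mono e (Nat.le_add_right n m)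
    _ = chainFactorCount T d m := chainFactorCount_eq_of_wcovBy he hd
      (by simp only [he_def, min_eq_right (Nat.le_add_right n m), Nat.add_sub_cancel_left,
        inf_eq_right.2 hle]) (by simp only [he_def, Nat.zero_min, Nat.zero_sub, htop, inf_idem])

theorem chainFactorCount_eq_ncard (c : ℕ → Submodule R X) (n : ℕ) :
    chainFactorCount T c n = (factorIndices T c ∩ Set.Iio n).ncard := by
  classical
  rw [chainFactorCount, Finset.sum_boole, Nat.cast_id, ← Set.ncard_coe_finset]
  congr 1
  ext i
  simp [factorIndices, and_comm]

theorem ncard_factorIndices_le_of_cofinal [Nontrivial T] {c d : ℕ → Submodule R X}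
    (hc : ∀ i, c (i + 1) ⩿ c i) (hd : ∀ i, d (i + 1) ⩿ d i) (htop : c 0 = d 0)
    (hc_fin : (factorIndices T c).Finite) (hd_fin : (factorIndices T d).Finite)
    (hcof : ∀ n, ∃ m, d m ≤ c n) : (factorIndices T c).ncard ≤ (factorIndices T d).ncard := by
  obtain ⟨b, hb⟩ := hc_fin.bddAbove
  obtain ⟨m, hm⟩ := hcof (b + 1)
  calc (factorIndices T c).ncard = chainFactorCount T c (b + 1) := by
        rw [chainFactorCount_eq_ncard, Set.inter_eq_left.2
          (show factorIndices T c ⊆ Set.Iio (b + 1) from fun i hi => Nat.lt_succ_of_le (hb hi))]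
    _ ≤ chainFactorCount T d m := chainFactorCount_le_of_le hc hd htop hm
    _ ≤ (factorIndices T d).ncard := by
        rw [chainFactorCount_eq_ncard]
        exact Set.ncard_le_ncard Set.inter_subset_left hd_fin

end Modules

theorem statement15_general {R : Type*} [Ring R] {X : Type*} [AddCommGroup X] [Module R X]
    {J : Type*} (S : J → Type*) [∀ j, AddCommGroup (S j)] [∀ j, Module R (S j)]
    (hsimple : ∀ j, IsSimpleModule R (S j))
    (hstable : ∀ Y : Submodule R X, StableDesc R ↥Y)
    (A B : ℕ → Submodule R X)
    (hA0 : A 0 = ⊤) (hB0 : B 0 = ⊤)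
    (hAdesc : ∀ i, A (i + 1) ≤ A i) (hBdesc : ∀ i, B (i + 1) ≤ B i)
    (hAinf : (⨅ i, A i) = ⊥) (hBinf : (⨅ i, B i) = ⊥)
    (hAq : ∀ i, Subsingleton (quotSub (A i) (A (i + 1))) ∨
      ∃ j, Nonempty (quotSub (A i) (A (i + 1)) ≃ₗ[R] S j))
    (hBq : ∀ i, Subsingleton (quotSub (B i) (B (i + 1))) ∨
      ∃ j, Nonempty (quotSub (B i) (B (i + 1)) ≃ₗ[R] S j))
    (hAfin : ∀ j, {i | Nonempty (quotSub (A i) (A (i + 1)) ≃ₗ[R] S j)}.Finite)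
    (hBfin : ∀ j, {i | Nonempty (quotSub (B i) (B (i + 1)) ≃ₗ[R] S j)}.Finite) :
    ∀ j, {i | Nonempty (quotSub (A i) (A (i + 1)) ≃ₗ[R] S j)}.ncard
      = {i | Nonempty (quotSub (B i) (B (i + 1)) ≃ₗ[R] S j)}.ncard := by
  have hwcov : ∀ {c : ℕ → Submodule R X}, (∀ i, c (i + 1) ≤ c i) →
      (∀ i, Subsingleton (quotSub (c i) (c (i + 1))) ∨
        ∃ j, Nonempty (quotSub (c i) (c (i + 1)) ≃ₗ[R] S j)) → ∀ i, c (i + 1) ⩿ c i :=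
    fun hdesc hq i => wcovBy_of_quotSub (hdesc i) <| (hq i).imp_right fun ⟨j, ⟨e⟩⟩ =>
      haveI := hsimple j; IsSimpleModule.congr e
  have hX : StableDesc R X := (hstable ⊤).of_linearEquiv Submodule.topEquiv
  have htop : A 0 = B 0 := hA0.trans hB0.symm
  intro j
  have := (hsimple j).nontrivial
  exact le_antisymm
    (ncard_factorIndices_le_of_cofinal (hwcov hAdesc hAq) (hwcov hBdesc hBq) htop
      (hAfin j) (hBfin j) (hX A B hA0 hB0 hAdesc hBdesc hAinf hBinf))
    (ncard_factorIndices_le_of_cofinal (hwcov hBdesc hBq) (hwcov hAdesc hAq) htop.symm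
      (hBfin j) (hAfin j) (hX B A hB0 hA0 hBdesc hAdesc hBinf hAinf))

/-- Let `X` be an `R`-module such that every submodule of `X` is stable for
descending filtrations, and let `(S_j)` be a family of pairwise non-isomorphic simple modules.
Any two descending ℤ-composition series of `X` with factors among the `S_j` and finite
multiplicities have the same simple factors with the same multiplicities. -/
theorem statement15 {R : Type*} [Ring R] {X : Type*} [AddCommGroup X] [Module R X]
    {J : Type*} (S : J → Type*) [∀ j, AddCommGroup (S j)] [∀ j, Module R (S j)]
    (hsimple : ∀ j, IsSimpleModule R (S j))
    (hpair : ∀ j j', j ≠ j' → IsEmpty (S j ≃ₗ[R] S j'))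
    (hstable : ∀ Y : Submodule R X, StableDesc R ↥Y)
    (A B : ℕ → Submodule R X)
    (hA0 : A 0 = ⊤) (hB0 : B 0 = ⊤)
    (hAdesc : ∀ i, A (i + 1) ≤ A i) (hBdesc : ∀ i, B (i + 1) ≤ B i)
    (hAinf : (⨅ i, A i) = ⊥) (hBinf : (⨅ i, B i) = ⊥)
    (hAq : ∀ i, Subsingleton (quotSub (A i) (A (i + 1))) ∨
      ∃ j, Nonempty (quotSub (A i) (A (i + 1)) ≃ₗ[R] S j))
    (hBq : ∀ i, Subsingleton (quotSub (B i) (B (i + 1))) ∨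
      ∃ j, Nonempty (quotSub (B i) (B (i + 1)) ≃ₗ[R] S j))
    (hAfin : ∀ j, {i | Nonempty (quotSub (A i) (A (i + 1)) ≃ₗ[R] S j)}.Finite)
    (hBfin : ∀ j, {i | Nonempty (quotSub (B i) (B (i + 1)) ≃ₗ[R] S j)}.Finite) :
    ∀ j, {i | Nonempty (quotSub (A i) (A (i + 1)) ≃ₗ[R] S j)}.ncard
      = {i | Nonempty (quotSub (B i) (B (i + 1)) ≃ₗ[R] S j)}.ncard :=
  statement15_general S hsimple hstable A B hA0 hB0 hAdesc hBdesc hAinf hBinf hAq hBq hAfin hBfin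
end
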